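/- For any probability vector p on a finite set A and any functions h₁, h₂ : A → ℝ, the covariance under p satisfies |Cov_p(h₁, h₂)| := |∑_a p(a)h₁(a)h₂(a) − (∑_a p(a)h₁(a))(∑_a p(a)h₂(a))| ≤ (1/2)·‖h₁‖₂·‖h₂‖₂, where ‖h‖₂ = (∑_a h(a)²)^{1/2}. -/
import Mathlib

open Finset

private lemma sum_center {A : Type*} [Fintype A] (p x : A → ℝ)
    (hsum : ∑ a, p a = 1) (c : ℝ) :
    ∑ a, p a * (x a - c) ^ 2
      = (∑ a, p a * x a ^ 2) - 2 * c * (∑ a, p a * x a) + c ^ 2 := by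
  have : ∀ a ∈ univ, p a * (x a - c) ^ 2
      = p a * x a ^ 2 - 2 * c * (p a * x a) + c ^ 2 * p a := fun a _ => by ring
  rw [Finset.sum_congr rfl this, Finset.sum_add_distrib, Finset.sum_sub_distrib,
    ← Finset.mul_sum, ← Finset.mul_sum, hsum]
  ring

private lemma var_le {A : Type*} [Fintype A] [Nonempty A] (p x : A → ℝ)
    (hp0 : ∀ a, 0 ≤ p a) (hsum : ∑ a, p a = 1) :
    (∑ a, p a * x a ^ 2) - (∑ a, p a * x a) ^ 2 ≤ (1 / 2) * ∑ a, x a ^ 2 := by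
  classical
  obtain ⟨a₀, -, hmax⟩ := Finset.exists_max_image (univ : Finset A) x univ_nonempty
  obtain ⟨a₁, -, hmin⟩ := Finset.exists_min_image (univ : Finset A) x univ_nonempty
  set c : ℝ := (x a₀ + x a₁) / 2 with hc
  have h1 : (∑ a, p a * x a ^ 2) - (∑ a, p a * x a) ^ 2 ≤ ∑ a, p a * (x a - c) ^ 2 := by
    rw [sum_center p x hsum c]
    nlinarith [sq_nonneg ((∑ a, p a * x a) - c)]
  have h2 : ∑ a, p a * (x a - c) ^ 2 ≤ ((x a₀ - x a₁) / 2) ^ 2 := by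
    calc ∑ a, p a * (x a - c) ^ 2 ≤ ∑ a, p a * ((x a₀ - x a₁) / 2) ^ 2 := by
          apply Finset.sum_le_sum
          intro a _
          have h3 := hmax a (mem_univ a)
          have h4 := hmin a (mem_univ a)
          apply mul_le_mul_of_nonneg_left _ (hp0 a)
          nlinarith [mul_nonneg (sub_nonneg.2 h3) (sub_nonneg.2 h4)]
      _ = ((x a₀ - x a₁) / 2) ^ 2 := by
          rw [← Finset.sum_mul, hsum, one_mul]
  have h5 : ((x a₀ - x a₁) / 2) ^ 2 ≤ (1 / 2) * ∑ a, x a ^ 2 := by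
    by_cases h : a₀ = a₁
    · have : x a₀ = x a₁ := by rw [h]
      have hnn : (0:ℝ) ≤ ∑ a, x a ^ 2 :=
        Finset.sum_nonneg fun a _ => sq_nonneg _
      nlinarith
    · have hsub : ({a₀, a₁} : Finset A) ⊆ univ := subset_univ _
      have hpair : ∑ a ∈ ({a₀, a₁} : Finset A), x a ^ 2 = x a₀ ^ 2 + x a₁ ^ 2 :=
        Finset.sum_pair h
      have hle : ∑ a ∈ ({a₀, a₁} : Finset A), x a ^ 2 ≤ ∑ a, x a ^ 2 :=
        Finset.sum_le_sum_of_subset_of_nonneg hsub fun a _ _ => sq_nonneg _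
      nlinarith [sq_nonneg (x a₀ + x a₁)]
  linarith

/-- For any probability vector `p` on a finite set `A` and any `h₁ h₂ : A → ℝ`,
`|Cov_p(h₁,h₂)| ≤ (1/2)·‖h₁‖₂·‖h₂‖₂` where `‖h‖₂ = (∑ a, h a ^ 2)^{1/2}`. -/
theorem stmt2 {A : Type*} [Fintype A] [Nonempty A]
    (p h₁ h₂ : A → ℝ) (hp0 : ∀ a, 0 ≤ p a) (hp1 : ∀ a, p a ≤ 1)
    (hsum : ∑ a, p a = 1) :
    |(∑ a, p a * h₁ a * h₂ a) - (∑ a, p a * h₁ a) * (∑ a, p a * h₂ a)|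
      ≤ (1 / 2) * Real.sqrt (∑ a, (h₁ a) ^ 2) * Real.sqrt (∑ a, (h₂ a) ^ 2) := by
  set m₁ := ∑ a, p a * h₁ a with hm₁
  set m₂ := ∑ a, p a * h₂ a with hm₂
  set f : A → ℝ := fun a => Real.sqrt (p a) * (h₁ a - m₁) with hf
  set g : A → ℝ := fun a => Real.sqrt (p a) * (h₂ a - m₂) with hg
  have hpf : ∀ a, Real.sqrt (p a) * Real.sqrt (p a) = p a :=
    fun a => Real.mul_self_sqrt (hp0 a)
  have hcov : (∑ a, p a * h₁ a * h₂ a) - m₁ * m₂ = ∑ a, f a * g a := by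
    have : ∀ a ∈ univ, f a * g a
        = p a * h₁ a * h₂ a - m₂ * (p a * h₁ a) - m₁ * (p a * h₂ a) + m₁ * m₂ * p a := by
      intro a _
      calc f a * g a = (Real.sqrt (p a) * Real.sqrt (p a)) * ((h₁ a - m₁) * (h₂ a - m₂)) := by
            simp only [hf, hg]; ring
        _ = p a * h₁ a * h₂ a - m₂ * (p a * h₁ a) - m₁ * (p a * h₂ a) + m₁ * m₂ * p a := by
            rw [hpf a]; ring
    rw [Finset.sum_congr rfl this]
    rw [Finset.sum_add_distrib, Finset.sum_sub_distrib, Finset.sum_sub_distrib,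
      ← Finset.mul_sum, ← Finset.mul_sum, ← Finset.mul_sum, hsum, ← hm₁, ← hm₂]
    ring
  have hfs : ∑ a, f a ^ 2 = (∑ a, p a * (h₁ a - m₁) ^ 2) := by
    apply Finset.sum_congr rfl; intro a _
    simp only [hf]; rw [mul_pow, sq, hpf a]
  have hgs : ∑ a, g a ^ 2 = (∑ a, p a * (h₂ a - m₂) ^ 2) := by
    apply Finset.sum_congr rfl; intro a _
    simp only [hg]; rw [mul_pow, sq, hpf a]
  have hv₁ : ∑ a, f a ^ 2 ≤ (1 / 2) * ∑ a, (h₁ a) ^ 2 := by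
    rw [hfs, sum_center p h₁ hsum m₁, ← hm₁]
    have := var_le p h₁ hp0 hsum
    rw [← hm₁] at this
    nlinarith
  have hv₂ : ∑ a, g a ^ 2 ≤ (1 / 2) * ∑ a, (h₂ a) ^ 2 := by
    rw [hgs, sum_center p h₂ hsum m₂, ← hm₂]
    have := var_le p h₂ hp0 hsum
    rw [← hm₂] at this
    nlinarith
  have hcs : (∑ a, f a * g a) ^ 2 ≤ (∑ a, f a ^ 2) * ∑ a, g a ^ 2 :=
    Finset.sum_mul_sq_le_sq_mul_sq univ f g
  have hfn : (0:ℝ) ≤ ∑ a, f a ^ 2 := Finset.sum_nonneg fun a _ => sq_nonneg _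
  have hgn : (0:ℝ) ≤ ∑ a, g a ^ 2 := Finset.sum_nonneg fun a _ => sq_nonneg _
  set S₁ := Real.sqrt (∑ a, (h₁ a) ^ 2) with hS₁
  set S₂ := Real.sqrt (∑ a, (h₂ a) ^ 2) with hS₂
  have hS₁sq : S₁ ^ 2 = ∑ a, (h₁ a) ^ 2 :=
    Real.sq_sqrt (Finset.sum_nonneg fun a _ => sq_nonneg _)
  have hS₂sq : S₂ ^ 2 = ∑ a, (h₂ a) ^ 2 :=
    Real.sq_sqrt (Finset.sum_nonneg fun a _ => sq_nonneg _)
  have hRnn : (0:ℝ) ≤ (1 / 2) * S₁ * S₂ := by positivity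
  have hsq : ((∑ a, p a * h₁ a * h₂ a) - m₁ * m₂) ^ 2 ≤ ((1 / 2) * S₁ * S₂) ^ 2 := by
    rw [hcov]
    calc (∑ a, f a * g a) ^ 2 ≤ (∑ a, f a ^ 2) * ∑ a, g a ^ 2 := hcs
      _ ≤ ((1 / 2) * ∑ a, (h₁ a) ^ 2) * ((1 / 2) * ∑ a, (h₂ a) ^ 2) := by
          apply mul_le_mul hv₁ hv₂ hgn
          positivity
      _ = ((1 / 2) * S₁ * S₂) ^ 2 := by rw [← hS₁sq, ← hS₂sq]; ring
  calc |(∑ a, p a * h₁ a * h₂ a) - m₁ * m₂|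
      = Real.sqrt (((∑ a, p a * h₁ a * h₂ a) - m₁ * m₂) ^ 2) := (Real.sqrt_sq_eq_abs _).symm
    _ ≤ Real.sqrt (((1 / 2) * S₁ * S₂) ^ 2) := Real.sqrt_le_sqrt hsq
    _ = (1 / 2) * S₁ * S₂ := Real.sqrt_sq hRnn
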